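/- For every q > 0 there exists a constant c(q) > 0 such that for all u, v ∈ ℝ^N one has |⟦u⟧^{(q+1)/2} − ⟦v⟧^{(q+1)/2}|^2 ≤ c(q) 𝔟[u,v] and 𝔟[u,v] ≤ (⟦v⟧^q − ⟦u⟧^q) · (v − u); in particular 𝔟[u,v] ≥ 0. -/

import Mathlib

/-!
`𝔟` is the Bregman distance of `F(w) = |w|^{q+1}/(q+1)`, whose gradient is `⟦w⟧^q`, and
`𝔟[u,v] + 𝔟[v,u] = (⟦v⟧^q − ⟦u⟧^q) · (v − u)`; so the upper bound follows from `𝔟 ≥ 0`.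
With `a = |u|`, `b = |v|`, `t = u · v`, both `(q+1) 𝔟[u,v]` and
`|⟦u⟧^{(q+1)/2} − ⟦v⟧^{(q+1)/2}|²` are affine in `t ∈ [−ab, ab]`, so the lower bound only has to
be checked at `t = ±ab`, where it is a weighted AM-GM inequality between `a^{q+1}`, `b^{q+1}`
and `(ab)^{(q+1)/2}`. Nonnegativity of `𝔟` is then a consequence of the lower bound.
-/

open Real RealInnerProductSpace

/-- The power `⟦w⟧^α := |w|^{α−1} w` (with `⟦0⟧^α = 0`). -/
noncomputable def vpow {N : ℕ} (α : ℝ) (w : EuclideanSpace ℝ (Fin N)) :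
    EuclideanSpace ℝ (Fin N) :=
  ‖w‖ ^ (α - 1) • w

/-- The boundary term `𝔟[u,v] := (1/(q+1))|v|^{q+1} − (1/(q+1))|u|^{q+1} − ⟦u⟧^q · (v − u)`. -/
noncomputable def bdry {N : ℕ} (q : ℝ) (u v : EuclideanSpace ℝ (Fin N)) : ℝ :=
  (1 / (q + 1)) * ‖v‖ ^ (q + 1) - (1 / (q + 1)) * ‖u‖ ^ (q + 1) - ⟪vpow q u, v - u⟫

lemma rpow_sub_one_mul_self {x e : ℝ} (hx : 0 ≤ x) (he : e ≠ 0) : x ^ (e - 1) * x = x ^ e := by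
  simpa using (rpow_of_add_eq hx he (sub_add_cancel e 1)).symm

lemma rpow_div_two_sq {x : ℝ} (hx : 0 ≤ x) (e : ℝ) : (x ^ (e / 2)) ^ 2 = x ^ e := by
  rw [← rpow_mul_natCast hx]; norm_num

lemma rpow_mul_rpow_mul_rpow_le {x y z α β γ s : ℝ} (hx : 0 ≤ x) (hy : 0 ≤ y) (hz : 0 ≤ z)
    (hα : 0 ≤ α) (hβ : 0 ≤ β) (hγ : 0 ≤ γ) (hs : α + β + γ = s) (hs0 : 0 < s) :
    s * (x ^ α * y ^ β * z ^ γ) ≤ α * x ^ s + β * y ^ s + γ * z ^ s := by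
  have hpow {w : ℝ} (hw : 0 ≤ w) (δ : ℝ) : (w ^ s) ^ (δ / s) = w ^ δ := by
    rw [← rpow_mul hw, mul_div_cancel₀ _ hs0.ne']
  have h := geom_mean_le_arith_mean3_weighted (div_nonneg hα hs0.le) (div_nonneg hβ hs0.le)
    (div_nonneg hγ hs0.le) (rpow_nonneg hx s) (rpow_nonneg hy s) (rpow_nonneg hz s)
    (by rw [← add_div, ← add_div, hs, div_self hs0.ne'])
  rw [hpow hx, hpow hy, hpow hz] at h
  calc s * (x ^ α * y ^ β * z ^ γ)
      ≤ s * (α / s * x ^ s + β / s * y ^ s + γ / s * z ^ s) := by gcongr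
    _ = α * x ^ s + β * y ^ s + γ * z ^ s := by field_simp

-- Weighted AM-GM of `a`, `b`, `√(ab)` with weights `q - k`, `1 - k`, `2k`.
lemma young_rpow_remainder {q k a b : ℝ} (hq : 0 < q) (hk0 : 0 ≤ k) (hkq : k ≤ q) (hk1 : k ≤ 1)
    (ha : 0 ≤ a) (hb : 0 ≤ b) :
    k * (a ^ (q + 1) + b ^ (q + 1) - 2 * (a ^ ((q + 1) / 2) * b ^ ((q + 1) / 2)))
      ≤ q * a ^ (q + 1) + b ^ (q + 1) - (q + 1) * (a ^ q * b) := by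
  have hsqrt (e : ℝ) : (√a * √b) ^ e = a ^ (e / 2) * b ^ (e / 2) := by
    rw [mul_rpow (sqrt_nonneg a) (sqrt_nonneg b), sqrt_eq_rpow, sqrt_eq_rpow, ← rpow_mul ha,
      ← rpow_mul hb, one_div_mul_eq_div]
  have hmix : a ^ (q - k) * b ^ (1 - k) * (√a * √b) ^ (2 * k) = a ^ q * b := by
    rw [hsqrt, mul_div_cancel_left₀ _ two_ne_zero]
    calc _ = (a ^ (q - k) * a ^ k) * (b ^ (1 - k) * b ^ k) := by ring
      _ = a ^ q * b := by
        rw [← rpow_of_add_eq ha hq.ne' (sub_add_cancel q k),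
          ← rpow_of_add_eq hb one_ne_zero (sub_add_cancel 1 k), rpow_one]
  have h := rpow_mul_rpow_mul_rpow_le ha hb (mul_nonneg (sqrt_nonneg a) (sqrt_nonneg b))
    (sub_nonneg.2 hkq) (sub_nonneg.2 hk1) (by positivity) (by ring : q - k + (1 - k) + 2 * k = q + 1)
    (by linarith)
  rw [hmix, hsqrt] at h
  linarith

lemma add_mul_le_add_mul_of_abs_le {α β γ δ s t : ℝ} (hup : α + β * s ≤ γ + δ * s)
    (hdown : α - β * s ≤ γ - δ * s) (ht : |t| ≤ s) : α + β * t ≤ γ + δ * t := by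
  obtain ⟨hlo, hhi⟩ := abs_le.mp ht
  rcases le_total β δ with h | h <;> nlinarith

lemma scalar_vpow_estimate {q k a b t : ℝ} (hq : 0 < q) (hk0 : 0 ≤ k) (hkq : k ≤ q) (hk1 : k ≤ 1)
    (ha : 0 ≤ a) (hb : 0 ≤ b) (ht : |t| ≤ a * b) :
    k * (a ^ (q + 1) + b ^ (q + 1) - 2 * (a ^ ((q + 1) / 2 - 1) * b ^ ((q + 1) / 2 - 1) * t))
      ≤ 2 * (q * a ^ (q + 1) + b ^ (q + 1) - (q + 1) * (a ^ (q - 1) * t)) := by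
  have hyoung := young_rpow_remainder hq le_rfl hq.le zero_le_one ha hb
  have hrem := young_rpow_remainder hq hk0 hkq hk1 ha hb
  have hamgm := two_mul_le_add_sq (a ^ ((q + 1) / 2)) (b ^ ((q + 1) / 2))
  rw [rpow_div_two_sq ha, rpow_div_two_sq hb] at hamgm
  set m := (q + 1) / 2
  have hm0 : m ≠ 0 := by positivity
  have hκ : a ^ (m - 1) * b ^ (m - 1) * (a * b) = a ^ m * b ^ m := by
    rw [mul_mul_mul_comm, rpow_sub_one_mul_self ha hm0, rpow_sub_one_mul_self hb hm0]
  have hρ : a ^ (q - 1) * (a * b) = a ^ q * b := by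
    rw [← mul_assoc, rpow_sub_one_mul_self ha hq.ne']
  have hA : 0 ≤ a ^ (q + 1) := by positivity
  have hB : 0 ≤ b ^ (q + 1) := by positivity
  have hP : 0 ≤ a ^ q * b := by positivity
  have haffine := add_mul_le_add_mul_of_abs_le (α := k * (a ^ (q + 1) + b ^ (q + 1)))
    (β := -2 * k * (a ^ (m - 1) * b ^ (m - 1))) (γ := 2 * (q * a ^ (q + 1) + b ^ (q + 1)))
    (δ := -2 * (q + 1) * a ^ (q - 1)) ?_ ?_ ht
  · linarith
  · linear_combination hrem + hyoung - 2 * k * hκ + 2 * (q + 1) * hρ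
  · nlinarith [mul_le_mul_of_nonneg_left hamgm hk0, mul_le_mul_of_nonneg_right hkq hA,
      mul_le_mul_of_nonneg_right hk1 hB]

section vpow

variable {N : ℕ}

lemma norm_vpow {α : ℝ} (hα : α ≠ 0) (w : EuclideanSpace ℝ (Fin N)) :
    ‖vpow α w‖ = ‖w‖ ^ α := by
  rw [vpow, norm_smul, norm_of_nonneg (rpow_nonneg (norm_nonneg w) _),
    rpow_sub_one_mul_self (norm_nonneg w) hα]

lemma inner_vpow_vpow (α β : ℝ) (u v : EuclideanSpace ℝ (Fin N)) :
    ⟪vpow α u, vpow β v⟫ = ‖u‖ ^ (α - 1) * ‖v‖ ^ (β - 1) * ⟪u, v⟫ := by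
  rw [vpow, vpow, real_inner_smul_left, real_inner_smul_right]; ring

lemma bdry_add_bdry_swap (q : ℝ) (u v : EuclideanSpace ℝ (Fin N)) :
    bdry q u v + bdry q v u = ⟪vpow q v - vpow q u, v - u⟫ := by
  simp only [bdry, inner_sub_left, inner_sub_right]
  ring

lemma add_one_mul_bdry {q : ℝ} (hq : q + 1 ≠ 0) (u v : EuclideanSpace ℝ (Fin N)) :
    (q + 1) * bdry q u v
      = q * ‖u‖ ^ (q + 1) + ‖v‖ ^ (q + 1) - (q + 1) * (‖u‖ ^ (q - 1) * ⟪u, v⟫) := by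
  have hself : ⟪vpow q u, u⟫ = ‖u‖ ^ (q + 1) := by
    rw [vpow, real_inner_smul_left, real_inner_self_eq_norm_sq, ← rpow_two,
      ← rpow_of_add_eq (norm_nonneg u) hq (by ring)]
  rw [bdry, inner_sub_right, hself, vpow, real_inner_smul_left]
  field_simp
  ring

lemma norm_vpow_sub_vpow_sq_le {q k : ℝ} (hk : 0 < k) (hkq : k ≤ q) (hk1 : k ≤ 1)
    (u v : EuclideanSpace ℝ (Fin N)) :
    ‖vpow ((q + 1) / 2) u - vpow ((q + 1) / 2) v‖ ^ 2 ≤ 2 * (q + 1) / k * bdry q u v := by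
  have hq : 0 < q := hk.trans_le hkq
  have hsq (w : EuclideanSpace ℝ (Fin N)) : ‖vpow ((q + 1) / 2) w‖ ^ 2 = ‖w‖ ^ (q + 1) := by
    rw [norm_vpow (by positivity), rpow_div_two_sq (norm_nonneg w)]
  have hscalar := scalar_vpow_estimate hq hk.le hkq hk1 (norm_nonneg u) (norm_nonneg v)
    (abs_real_inner_le_norm u v)
  rw [norm_sub_sq_real, hsq, hsq, inner_vpow_vpow, div_mul_eq_mul_div, le_div_iff₀ hk, mul_assoc 2,
    add_one_mul_bdry (by linarith)]
  linarith

end vpow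

/-- For every `q > 0` there is `c(q) > 0` with
`|⟦u⟧^{(q+1)/2} − ⟦v⟧^{(q+1)/2}|^2 ≤ c(q) 𝔟[u,v]` and
`𝔟[u,v] ≤ (⟦v⟧^q − ⟦u⟧^q) · (v − u)`; in particular `𝔟[u,v] ≥ 0`. -/
theorem bdry_estimates (N : ℕ) (q : ℝ) (hq : 0 < q) :
    ∃ c : ℝ, 0 < c ∧ ∀ u v : EuclideanSpace ℝ (Fin N),
      ‖vpow ((q + 1) / 2) u - vpow ((q + 1) / 2) v‖ ^ (2 : ℕ) ≤ c * bdry q u v ∧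
      bdry q u v ≤ ⟪vpow q v - vpow q u, v - u⟫ ∧
      0 ≤ bdry q u v := by
  have hk : 0 < min q 1 := lt_min hq one_pos
  have hc : 0 < 2 * (q + 1) / min q 1 := by positivity
  have hest (u v : EuclideanSpace ℝ (Fin N)) :=
    norm_vpow_sub_vpow_sq_le hk (min_le_left q 1) (min_le_right q 1) u v
  have hnonneg (u v : EuclideanSpace ℝ (Fin N)) : 0 ≤ bdry q u v :=
    nonneg_of_mul_nonneg_right ((sq_nonneg _).trans (hest u v)) hc
  refine ⟨_, hc, fun u v => ⟨hest u v, ?_, hnonneg u v⟩⟩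
  rw [← bdry_add_bdry_swap]
  linarith [hnonneg v u]
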